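/- Let $q$ be a real number with $q > 0$ and $q \ne 1$. Define $C_q(p,r,n)$ and $D_q(p,r,n)$ for integers $p \ge 0$, $r \ge 1$, $n \ge 0$ by $C_q(0,r,n) = 0$, $D_q(0,r,n) = 0$, and for $p \ge 1$: $C_q(p,r,n) = \frac{[n]_q}{[r]_q}\bigl(q^{(p-1)(n-1)} + (1 - q^{p-1}) C_q(p-1, r+1, n-1)\bigr)$ and $D_q(p,r,n) = \frac{q^{r-1}}{[r]_q} \binom{n+r-1}{r}_q \bigl(q^{(p-1)(n-1)} + (1 - q^{p-1}) C_q(p-1, r+1, n-1)\bigr) + (1 - q^{p-1}) D_q(p-1, r+1, n-1)$. Then for all positive integers $n$, $p$, $r$, $\sum_{\ell=1}^{n} q^{p(n-\ell)} H_{n-\ell}^{(r)}(q) = C_q(p,r,n) H_n^{(r)}(q) - D_q(p,r,n)$. -/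

import Mathlib

/-- The `q`-integer `[n]_q = (1 - q^n)/(1 - q)`. -/
noncomputable def qint (q : ℝ) (n : ℕ) : ℝ := (1 - q ^ n) / (1 - q)

/-- The `q`-factorial `[n]_q! = [n]_q [n-1]_q ⋯ [1]_q`, with `[0]_q! = 1`. -/
noncomputable def qfact (q : ℝ) : ℕ → ℝ
  | 0 => 1
  | n + 1 => qint q (n + 1) * qfact q n

/-- The `q`-binomial coefficient `C(n,k)_q = [n]_q!/([k]_q! [n-k]_q!)`, equal to `0` for `k > n`. -/
noncomputable def qbinom (q : ℝ) (n k : ℕ) : ℝ :=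
  if k ≤ n then qfact q n / (qfact q k * qfact q (n - k)) else 0

/-- The `q`-hyperharmonic numbers: `H_n^{(0)}(q) = 1/(q [n]_q)` and
`H_n^{(r)}(q) = ∑_{j=1}^n q^j H_j^{(r-1)}(q)` for `r ≥ 1` (so `H_0^{(r)}(q) = 0`). -/
noncomputable def qhyp (q : ℝ) : ℕ → ℕ → ℝ
  | 0, n => 1 / (q * qint q n)
  | r + 1, n => ∑ j ∈ Finset.Icc 1 n, q ^ j * qhyp q r j

/-- `C_q(p,r,n)`, defined by `C_q(0,r,n) = 0` and, for `p ≥ 1`,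
`C_q(p,r,n) = ([n]_q/[r]_q) (q^{(p-1)(n-1)} + (1 - q^{p-1}) C_q(p-1, r+1, n-1))`. -/
noncomputable def Cq (q : ℝ) : ℕ → ℕ → ℕ → ℝ
  | 0, _, _ => 0
  | p + 1, r, n => qint q n / qint q r *
      (q ^ (p * (n - 1)) + (1 - q ^ p) * Cq q p (r + 1) (n - 1))

/-- `D_q(p,r,n)`, defined by `D_q(0,r,n) = 0` and, for `p ≥ 1`,
`D_q(p,r,n) = (q^{r-1}/[r]_q) C(n+r-1, r)_q (q^{(p-1)(n-1)} + (1 - q^{p-1}) C_q(p-1, r+1, n-1))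
   + (1 - q^{p-1}) D_q(p-1, r+1, n-1)`. -/
noncomputable def Dq (q : ℝ) : ℕ → ℕ → ℕ → ℝ
  | 0, _, _ => 0
  | p + 1, r, n => q ^ (r - 1) / qint q r * qbinom q (n + r - 1) r *
      (q ^ (p * (n - 1)) + (1 - q ^ p) * Cq q p (r + 1) (n - 1)) +
      (1 - q ^ p) * Dq q p (r + 1) (n - 1)

/-! With `k = n - ℓ` the sum is `∑_{k<n} q^{pk} H_k^{(r)}`. Summing by parts against `H^{(r+1)}`
lowers `p` by one and raises `r` by one; the boundary term `H_{n-1}^{(r+1)}` is then rewritten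
through `[r]_q H_{n-1}^{(r+1)} = [n]_q H_n^{(r)} - q^{r-1} C(n+r-1, r)_q`. This is exactly the recursion
defining `C_q` and `D_q`, so the identity follows by induction on `p`. -/

open Finset

variable {q : ℝ}

lemma qint_zero : qint q 0 = 0 := by simp [qint]

lemma qint_one (hq1 : q ≠ 1) : qint q 1 = 1 := by
  simp [qint, sub_ne_zero.2 hq1.symm]

lemma qint_add (hq1 : q ≠ 1) (m n : ℕ) : qint q (m + n) = qint q m + q ^ m * qint q n := by
  have : (1 : ℝ) - q ≠ 0 := sub_ne_zero.2 hq1.symm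
  simp only [qint]
  field_simp
  ring

lemma qint_ne_zero (hq : 0 ≤ q) (hq1 : q ≠ 1) {n : ℕ} (hn : n ≠ 0) : qint q n ≠ 0 :=
  div_ne_zero (sub_ne_zero.2 (Ne.symm (mt (pow_eq_one_iff_of_nonneg hq hn).1 hq1)))
    (sub_ne_zero.2 hq1.symm)

lemma qfact_ne_zero (hq : 0 ≤ q) (hq1 : q ≠ 1) (n : ℕ) : qfact q n ≠ 0 := by
  induction n with
  | zero => simp [qfact]
  | succ n ih => exact mul_ne_zero (qint_ne_zero hq hq1 n.succ_ne_zero) ih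

lemma qbinom_self (hq : 0 ≤ q) (hq1 : q ≠ 1) (n : ℕ) : qbinom q n n = 1 := by
  simp [qbinom, qfact, qfact_ne_zero hq hq1]

lemma qbinom_zero_right (hq : 0 ≤ q) (hq1 : q ≠ 1) (n : ℕ) : qbinom q n 0 = 1 := by
  simp [qbinom, qfact, qfact_ne_zero hq hq1]

lemma qbinom_of_lt {n k : ℕ} (h : n < k) : qbinom q n k = 0 := if_neg (by omega)

lemma qbinom_pascal (hq : 0 ≤ q) (hq1 : q ≠ 1) (n k : ℕ) :
    qbinom q (n + k + 2) (k + 1) =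
      qbinom q (n + k + 1) (k + 1) + q ^ (n + 1) * qbinom q (n + k + 1) k := by
  simp only [qbinom, if_pos (by omega : k + 1 ≤ n + k + 2), if_pos (by omega : k + 1 ≤ n + k + 1),
    if_pos (by omega : k ≤ n + k + 1), show n + k + 2 - (k + 1) = n + 1 by omega,
    show n + k + 1 - (k + 1) = n by omega, show n + k + 1 - k = n + 1 by omega]
  have hsplit : qint q (n + k + 2) = qint q (n + 1) + q ^ (n + 1) * qint q (k + 1) := by
    rw [← qint_add hq1]; ring_nf
  rw [show qfact q (n + k + 2) = qint q (n + k + 2) * qfact q (n + k + 1) from rfl,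
    show qfact q (n + 1) = qint q (n + 1) * qfact q n from rfl,
    show qfact q (k + 1) = qint q (k + 1) * qfact q k from rfl, hsplit]
  have := qfact_ne_zero hq hq1 n
  have := qfact_ne_zero hq hq1 k
  have := qint_ne_zero hq hq1 n.succ_ne_zero
  have := qint_ne_zero hq hq1 k.succ_ne_zero
  field_simp

lemma qhyp_succ_zero (r : ℕ) : qhyp q (r + 1) 0 = 0 := by
  simp [qhyp]

lemma qhyp_succ_succ (r n : ℕ) :
    qhyp q (r + 1) (n + 1) = qhyp q (r + 1) n + q ^ (n + 1) * qhyp q r (n + 1) := by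
  rw [qhyp, qhyp, sum_Icc_succ_top (by omega)]

lemma qhyp_succ_one (hq : q ≠ 0) (hq1 : q ≠ 1) (r : ℕ) : qhyp q (r + 1) 1 = q ^ r := by
  induction r with
  | zero => simp [qhyp, qint_one hq1, hq]
  | succ r ih => rw [qhyp, Icc_self, sum_singleton, ih, pow_one, pow_succ']

/-- The `q`-analogue of `r H_n^{(r+1)} = (n + 1) H_{n+1}^{(r)} - C(n + r, r)`, multiplied by `q`
so that it also holds for `r = 0`. -/
lemma qint_mul_qhyp_succ (hq : 0 < q) (hq1 : q ≠ 1) (r n : ℕ) :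
    q * qint q r * qhyp q (r + 1) n =
      q * qint q (n + 1) * qhyp q r (n + 1) - q ^ r * qbinom q (n + r) r := by
  induction r generalizing n with
  | zero =>
    have : q * qint q (n + 1) ≠ 0 := mul_ne_zero hq.ne' (qint_ne_zero hq.le hq1 n.succ_ne_zero)
    rw [qint_zero, mul_zero, zero_mul, qhyp, pow_zero, add_zero, qbinom_zero_right hq.le hq1,
      mul_one_div_cancel this, one_mul, sub_self]
  | succ r ihr =>
    induction n with
    | zero =>
      rw [qhyp_succ_zero, qhyp_succ_one hq.ne' hq1, qint_one hq1, zero_add,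
        qbinom_self hq.le hq1]
      ring
    | succ n ihn =>
      have hpascal := qbinom_pascal hq.le hq1 n r
      have hr : qint q (r + 1) = 1 + q * qint q r := by
        rw [add_comm, qint_add hq1, qint_one hq1, pow_one]
      have hn : qint q (n + 2) = qint q (n + 1) + q ^ (n + 1) := by
        rw [qint_add hq1 (n + 1) 1, qint_one hq1, mul_one]
      rw [show n + 1 + (r + 1) = n + r + 2 by omega, qhyp_succ_succ (r + 1) n,
        qhyp_succ_succ r (n + 1), hpascal, hn, hr]
      rw [show n + (r + 1) = n + r + 1 by omega, hr] at ihn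
      have ihr' := ihr (n + 1)
      rw [show n + 1 + r = n + r + 1 by omega, hn] at ihr'
      linear_combination ihn + q ^ (n + 2) * ihr'

lemma qint_succ_mul_qhyp_succ_succ (hq : 0 < q) (hq1 : q ≠ 1) (r n : ℕ) :
    qint q (r + 1) * qhyp q (r + 2) n =
      qint q (n + 1) * qhyp q (r + 1) (n + 1) - q ^ r * qbinom q (n + r + 1) (r + 1) := by
  apply mul_left_cancel₀ hq.ne'
  linear_combination qint_mul_qhyp_succ hq hq1 (r + 1) n

/-- Summation by parts against `H^{(r+2)}_k - H^{(r+2)}_{k-1} = q^k H^{(r+1)}_k`. -/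
lemma sum_range_succ_qpow_mul_qhyp (p r n : ℕ) :
    ∑ k ∈ range (n + 1), q ^ ((p + 1) * k) * qhyp q (r + 1) k =
      q ^ (p * n) * qhyp q (r + 2) n +
        (1 - q ^ p) * ∑ k ∈ range n, q ^ (p * k) * qhyp q (r + 2) k := by
  induction n with
  | zero => simp [qhyp_succ_zero]
  | succ n ih =>
    rw [sum_range_succ, ih, sum_range_succ, qhyp_succ_succ (r + 1) n]
    ring

lemma Cq_zero_right (p r : ℕ) : Cq q p r 0 = 0 := by
  cases p <;> simp [Cq, qint_zero]

lemma Dq_succ_zero_right (p r : ℕ) : Dq q p (r + 1) 0 = 0 := by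
  induction p generalizing r with
  | zero => rfl
  | succ p ih => simp [Dq, ih, qbinom_of_lt]

/-- The `q^r C(m+r+1, r+1)_q` term of `D_q(p+1, r+1, m+1)` combines with
`[m+1]_q H^{(r+1)}_{m+1}` into `[r+1]_q H^{(r+2)}_m` (`qint_succ_mul_qhyp_succ_succ`). -/
lemma Cq_mul_qhyp_sub_Dq_succ (hq : 0 < q) (hq1 : q ≠ 1) (p r m : ℕ) :
    Cq q (p + 1) (r + 1) (m + 1) * qhyp q (r + 1) (m + 1) - Dq q (p + 1) (r + 1) (m + 1) =
      q ^ (p * m) * qhyp q (r + 2) m +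
        (1 - q ^ p) * (Cq q p (r + 2) m * qhyp q (r + 2) m - Dq q p (r + 2) m) := by
  rw [Cq, Dq, Nat.add_sub_cancel, Nat.add_sub_cancel, show m + 1 + (r + 1) - 1 = m + r + 1 by omega]
  have := qint_ne_zero hq.le hq1 r.succ_ne_zero
  field_simp
  linear_combination -(q ^ (p * m) + (1 - q ^ p) * Cq q p (r + 2) m) *
    qint_succ_mul_qhyp_succ_succ hq hq1 r m

lemma sum_range_qpow_mul_qhyp (hq : 0 < q) (hq1 : q ≠ 1) (p r n : ℕ) :
    ∑ k ∈ range n, q ^ ((p + 1) * k) * qhyp q (r + 1) k =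
      Cq q (p + 1) (r + 1) n * qhyp q (r + 1) n - Dq q (p + 1) (r + 1) n := by
  induction p generalizing r n with
  | zero =>
    obtain _ | m := n
    · simp [Cq_zero_right, Dq_succ_zero_right]
    · rw [sum_range_succ_qpow_mul_qhyp, Cq_mul_qhyp_sub_Dq_succ hq hq1]
      simp
  | succ p ih =>
    obtain _ | m := n
    · simp [Cq_zero_right, Dq_succ_zero_right]
    · rw [sum_range_succ_qpow_mul_qhyp, Cq_mul_qhyp_sub_Dq_succ hq hq1, ih]

theorem sum_backward_qpow_mul_qhyp_general (q : ℝ) (hq : 0 < q) (hq1 : q ≠ 1) (n p r : ℕ)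
    (hp : 1 ≤ p) (hr : 1 ≤ r) :
    ∑ ℓ ∈ Finset.Icc 1 n, q ^ (p * (n - ℓ)) * qhyp q r (n - ℓ) =
      Cq q p r n * qhyp q r n - Dq q p r n := by
  obtain ⟨p, rfl⟩ := Nat.exists_eq_add_of_le' hp
  obtain ⟨r, rfl⟩ := Nat.exists_eq_add_of_le' hr
  rw [← Ico_add_one_right_eq_Icc, sum_Ico_eq_sum_range, Nat.add_sub_cancel]
  simp only [Nat.sub_add_eq]
  exact (sum_range_reflect (fun k => q ^ ((p + 1) * k) * qhyp q (r + 1) k) n).trans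
    (sum_range_qpow_mul_qhyp hq hq1 p r n)

/-- For `q > 0`, `q ≠ 1` and positive integers `n, p, r`,
`∑_{ℓ=1}^n q^{p(n-ℓ)} H_{n-ℓ}^{(r)}(q) = C_q(p,r,n) H_n^{(r)}(q) - D_q(p,r,n)`. -/
theorem sum_backward_qpow_mul_qhyp (q : ℝ) (hq : 0 < q) (hq1 : q ≠ 1) (n p r : ℕ)
    (hn : 1 ≤ n) (hp : 1 ≤ p) (hr : 1 ≤ r) :
    ∑ ℓ ∈ Finset.Icc 1 n, q ^ (p * (n - ℓ)) * qhyp q r (n - ℓ) =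
      Cq q p r n * qhyp q r n - Dq q p r n :=
  sum_backward_qpow_mul_qhyp_general q hq hq1 n p r hp hr
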